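/- arXiv:math/0504196 — 3 statements merged into one kernel-verified Lean document; each statement's English description precedes it below -/
import Mathlib

section
/- In ZF: let T₁ be the theory of dense linear orders without endpoints with constants c_n satisfying c_n < c_{n+1}, and p(x) = {c_n < x : n < ω}. If T₁ has a model with universe X omitting p(x), then T₁ has a model with universe X in which p(x) is realized but has no least realization. -/
/-!
A model of `T₁` on `X` is a dense linear order on `X` with a strictly increasing sequence `c`,
and it omits `p` exactly when `c` is cofinal. Reorder `X` lexicographically by a tag: a point of
the block `[c (2n+1), c (2n+2))` gets the tag `n` in `ℕᵒᵈ`, every other point the tag `⊥`. So the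
odd blocks are moved above all remaining points, stacked in decreasing order. Taking `c (2n)` as
the new constants, the realizations of `p` are exactly the points of the odd blocks, and since
`c (2n+3)` lies below the whole block `n`, none of them is least.
-/

open FirstOrder Language

/-- The vocabulary of the Ehrenfeucht example: the order symbol together with
constants `c_n` for `n < ω`. -/
abbrev EL : FirstOrder.Language := Language.order[[ℕ]]

instance : IsOrdered EL := ⟨Sum.inl leSymb⟩

/-- The constant `c_n`, as a closed term. -/
def cT (n : ℕ) : EL.Term (Empty ⊕ Fin 0) := Constants.term (Language.order.con n)

/-- The Ehrenfeucht theory `T₁`: dense linear order without endpoints together with the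
axioms `c_n < c_{n+1}` for all `n < ω`. -/
def T1 : EL.Theory :=
  (LHom.sumInl.onTheory Language.order.dlo) ∪
    Set.range (fun n : ℕ => (Term.lt (cT n) (cT (n + 1)) : EL.Sentence))

section
variable {X : Type*}

/-- The interpretation of `≤` in a structure `S` on `X`. -/
def Ele (S : EL.Structure X) (a b : X) : Prop :=
  @Structure.RelMap EL X S 2 (Sum.inl leSymb) ![a, b]

/-- The interpretation of `<` in a structure `S` on `X`. -/
def Elt (S : EL.Structure X) (a b : X) : Prop := Ele S a b ∧ a ≠ b

/-- The interpretation of the constant `c_n` in a structure `S` on `X`. -/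
def Econ (S : EL.Structure X) (n : ℕ) : X :=
  @Structure.funMap EL X S 0 (Language.order.con n) ![]

/-- `a` realizes the type `p(x) = {c_n < x : n < ω}` in the structure `S`. -/
def RealizesP (S : EL.Structure X) (a : X) : Prop := ∀ n : ℕ, Elt S (Econ S n) a

end

section ModelsOfT1

variable {X : Type*}

theorem exists_model_T1_of_strictMono [LinearOrder X] [DenselyOrdered X] [NoMinOrder X]
    [NoMaxOrder X] {c : ℕ → X} (hc : StrictMono c) :
    ∃ S : EL.Structure X, @Theory.Model EL X S T1 ∧
      (∀ a b : X, Ele S a b ↔ a ≤ b) ∧ ∀ n, Econ S n = c n := by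
  let : Language.order.Structure X := orderStructure X
  let : (constantsOn ℕ).Structure X := constantsOn.structure c
  let S : EL.Structure X := Language.sumStructure _ _ X
  have : Language.order.OrderedStructure X := ⟨fun _ => Iff.rfl⟩
  have : EL.OrderedStructure X := ⟨fun _ => Iff.rfl⟩
  refine ⟨S, Theory.model_union_iff.mpr ⟨?_, ?_⟩, fun _ _ => Iff.rfl, fun _ => rfl⟩
  · exact (LHom.onTheory_model LHom.sumInl _).mpr inferInstance
  · rw [Theory.model_iff]
    rintro φ ⟨n, rfl⟩
    show ((cT n).lt (cT (n + 1))).Realize (default : Empty → X) (default : Fin 0 → X)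
    rw [Term.realize_lt]
    exact hc n.lt_succ_self

theorem exists_linearOrder_of_model_T1 (S : EL.Structure X) (hS : @Theory.Model EL X S T1) :
    ∃ _ : LinearOrder X, DenselyOrdered X ∧ NoMinOrder X ∧ StrictMono (Econ S) ∧
      ∀ a b : X, Ele S a b ↔ a ≤ b := by
  classical
  let _ : (Language.order.sum (constantsOn ℕ)).Structure X := S
  let φ : Language.order →ᴸ Language.order.sum (constantsOn ℕ) := LHom.sumInl
  let : Language.order.Structure X := φ.reduct X
  have hexp : φ.IsExpansionOn X := LHom.isExpansionOn_reduct _ _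
  obtain ⟨hdlo, hconst⟩ := Theory.model_union_iff.mp hS
  have : X ⊨ Language.order.dlo := (@LHom.onTheory_model _ _ X _ _ _ hexp _).mp hdlo
  let lo : LinearOrder X := Language.order.linearOrderOfModels X
  have : EL.OrderedStructure X := ⟨fun x => by
    rw [show x = ![x 0, x 1] from funext fun i => by fin_cases i <;> rfl]; rfl⟩
  refine ⟨lo, Language.order.denselyOrdered_of_dlo X,
    (noBotOrder_iff_noMinOrder X).mp (Language.order.noBotOrder_of_dlo X),
    strictMono_nat_of_lt_succ fun n => ?_, fun _ _ => Iff.rfl⟩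
  have h : ((cT n).lt (cT (n + 1))).Realize (default : Empty → X) (default : Fin 0 → X) :=
    (Theory.model_iff _).mp hconst _ ⟨n, rfl⟩
  have hcon : ∀ m, (Language.order.con m : X) = Econ S m := fun m =>
    congrArg (Structure.funMap _) (funext fun i => i.elim0)
  simpa only [Term.realize_lt, cT, Term.realize_constants, hcon] using h

theorem realizesP_iff [LinearOrder X] {S : EL.Structure X} (hS : ∀ a b : X, Ele S a b ↔ a ≤ b)
    (a : X) : RealizesP S a ↔ ∀ n, Econ S n < a := by
  simp only [RealizesP, Elt, hS, lt_iff_le_and_ne]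

end ModelsOfT1

def LexBy {X T : Type*} (_f : X → T) : Type _ := X

namespace LexBy

variable {X T : Type*} [LinearOrder X] [LinearOrder T] (f : X → T)

def toLexBy : X ≃ LexBy f := Equiv.refl X

noncomputable instance : LinearOrder (LexBy f) :=
  LinearOrder.lift' (fun x => toLex (f ((toLexBy f).symm x), (toLexBy f).symm x))
    fun _ _ h => congrArg (fun p => (ofLex p).2) h

variable {f}

theorem toLexBy_lt_toLexBy {a b : X} :
    toLexBy f a < toLexBy f b ↔ f a < f b ∨ f a = f b ∧ a < b :=
  Prod.Lex.lt_iff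

theorem toLexBy_lt_toLexBy_of_lt {a b : X} (h : f a < f b) : toLexBy f a < toLexBy f b :=
  toLexBy_lt_toLexBy.mpr (Or.inl h)

theorem toLexBy_lt_toLexBy_of_le_of_lt {a b : X} (hf : f a ≤ f b) (h : a < b) :
    toLexBy f a < toLexBy f b :=
  toLexBy_lt_toLexBy.mpr (hf.lt_or_eq.imp_right fun he => ⟨he, h⟩)

theorem denselyOrdered (hdense : ∀ a b, f a = f b → a < b → ∃ z, f z = f a ∧ a < z ∧ z < b)
    (hmax : ∀ a, ∃ z, f z = f a ∧ a < z) : DenselyOrdered (LexBy f) where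
  dense a b hab := by
    obtain ⟨a, rfl⟩ := (toLexBy f).surjective a
    obtain ⟨b, rfl⟩ := (toLexBy f).surjective b
    rcases toLexBy_lt_toLexBy.mp hab with hlt | ⟨heq, hlt⟩
    · obtain ⟨z, hz, haz⟩ := hmax a
      exact ⟨toLexBy f z, toLexBy_lt_toLexBy_of_le_of_lt hz.ge haz,
        toLexBy_lt_toLexBy_of_lt (hz ▸ hlt)⟩
    · obtain ⟨z, hz, haz, hzb⟩ := hdense a b heq hlt
      exact ⟨toLexBy f z, toLexBy_lt_toLexBy_of_le_of_lt hz.ge haz,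
        toLexBy_lt_toLexBy_of_le_of_lt (hz.trans heq).le hzb⟩

theorem noMaxOrder (h : ∀ a, ∃ z, f a ≤ f z ∧ a < z) : NoMaxOrder (LexBy f) where
  exists_gt a := by
    obtain ⟨a, rfl⟩ := (toLexBy f).surjective a
    obtain ⟨z, hf, hz⟩ := h a
    exact ⟨toLexBy f z, toLexBy_lt_toLexBy_of_le_of_lt hf hz⟩

theorem noMinOrder (h : ∀ a, ∃ w, f w ≤ f a ∧ w < a) : NoMinOrder (LexBy f) where
  exists_lt a := by
    obtain ⟨a, rfl⟩ := (toLexBy f).surjective a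
    obtain ⟨w, hf, hw⟩ := h a
    exact ⟨toLexBy f w, toLexBy_lt_toLexBy_of_le_of_lt hf hw⟩

end LexBy

section Shuffle

open OrderDual

variable {X : Type*} [LinearOrder X] {c : ℕ → X}

def oddBlock (c : ℕ → X) (n : ℕ) : Set X := Set.Ico (c (2 * n + 1)) (c (2 * n + 2))

theorem eq_of_mem_oddBlock (hc : StrictMono c) {x : X} {m n : ℕ} (hm : x ∈ oddBlock c m)
    (hn : x ∈ oddBlock c n) : m = n := by
  have h₁ := hc.lt_iff_lt.mp (hm.1.trans_lt hn.2)
  have h₂ := hc.lt_iff_lt.mp (hn.1.trans_lt hm.2)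
  omega

theorem notMem_oddBlock_of_mem_Ico (hc : StrictMono c) {x : X} {m : ℕ}
    (hx : x ∈ Set.Ico (c (2 * m)) (c (2 * m + 1))) (n : ℕ) : x ∉ oddBlock c n := fun hn => by
  have h₁ := hc.lt_iff_lt.mp (hn.1.trans_lt hx.2)
  have h₂ := hc.lt_iff_lt.mp (hx.1.trans_lt hn.2)
  omega

theorem notMem_oddBlock_of_lt (hc : StrictMono c) {x : X} (hx : x < c 1) (n : ℕ) :
    x ∉ oddBlock c n := fun hn => by
  have := hc.lt_iff_lt.mp (hn.1.trans_lt hx)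
  omega

open Classical in
noncomputable def blockTag (c : ℕ → X) (x : X) : WithBot ℕᵒᵈ :=
  if h : ∃ n, x ∈ oddBlock c n then (toDual (Nat.find h) : ℕᵒᵈ) else ⊥

theorem blockTag_eq_bot_iff {x : X} : blockTag c x = ⊥ ↔ ∀ n, x ∉ oddBlock c n := by
  unfold blockTag
  split_ifs with h <;> simp_all

theorem blockTag_eq_coe_iff (hc : StrictMono c) {x : X} {n : ℕ} :
    blockTag c x = (toDual n : ℕᵒᵈ) ↔ x ∈ oddBlock c n := by
  classical
  unfold blockTag
  split_ifs with h
  · rw [WithBot.coe_inj, toDual_inj]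
    exact ⟨fun hn => hn ▸ Nat.find_spec h, fun hn => eq_of_mem_oddBlock hc (Nat.find_spec h) hn⟩
  · simp_all

theorem blockTag_apply_two_mul (hc : StrictMono c) (n : ℕ) : blockTag c (c (2 * n)) = ⊥ :=
  blockTag_eq_bot_iff.mpr (notMem_oddBlock_of_mem_Ico hc ⟨le_rfl, hc (by omega)⟩)

theorem exists_between_blockTag_eq [DenselyOrdered X] (hc : StrictMono c) {a b : X}
    (hab : blockTag c a = blockTag c b) (hlt : a < b) :
    ∃ z, blockTag c z = blockTag c a ∧ a < z ∧ z < b := by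
  obtain ⟨z₀, haz₀, hz₀b⟩ := exists_between hlt
  by_cases ha : ∃ n, a ∈ oddBlock c n
  · obtain ⟨n, ha⟩ := ha
    have hb : b ∈ oddBlock c n :=
      (blockTag_eq_coe_iff hc).mp (hab ▸ (blockTag_eq_coe_iff hc).mpr ha)
    refine ⟨z₀, ?_, haz₀, hz₀b⟩
    rw [(blockTag_eq_coe_iff hc).mpr ha, blockTag_eq_coe_iff hc]
    exact ⟨ha.1.trans haz₀.le, hz₀b.trans hb.2⟩
  rw [not_exists] at ha
  rw [blockTag_eq_bot_iff.mpr ha]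
  by_cases hz₀ : ∃ m, z₀ ∈ oddBlock c m
  · obtain ⟨m, hm⟩ := hz₀
    -- `a` lies below the block of `z₀`, and the gap `[c (2m), c (2m+1))` below that block
    -- contains points of the ⊥-fibre above `a`.
    have hac : a < c (2 * m + 1) := not_le.mp fun h => ha m ⟨h, haz₀.trans hm.2⟩
    obtain ⟨z, hz₁, hz₂⟩ := exists_between (max_lt hac (hc (by omega : 2 * m < 2 * m + 1)))
    refine ⟨z, ?_, (le_max_left _ _).trans_lt hz₁, (hz₂.trans_le hm.1).trans hz₀b⟩
    exact blockTag_eq_bot_iff.mpr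
      (notMem_oddBlock_of_mem_Ico hc ⟨(le_max_right _ _).trans hz₁.le, hz₂⟩)
  · rw [not_exists] at hz₀
    exact ⟨z₀, blockTag_eq_bot_iff.mpr hz₀, haz₀, hz₀b⟩

theorem exists_gt_blockTag_eq [DenselyOrdered X] (hc : StrictMono c)
    (hcof : ∀ x, ∃ n, x ≤ c n) (a : X) : ∃ z, blockTag c z = blockTag c a ∧ a < z := by
  by_cases ha : ∃ n, a ∈ oddBlock c n
  · obtain ⟨n, ha⟩ := ha
    obtain ⟨z, haz, hz⟩ := exists_between ha.2
    refine ⟨z, ?_, haz⟩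
    rw [(blockTag_eq_coe_iff hc).mpr ha, blockTag_eq_coe_iff hc]
    exact ⟨ha.1.trans haz.le, hz⟩
  · rw [not_exists] at ha
    obtain ⟨k, hk⟩ := hcof a
    refine ⟨c (2 * (k + 1)), ?_, hk.trans_lt (hc (by omega))⟩
    rw [blockTag_apply_two_mul hc, blockTag_eq_bot_iff.mpr ha]

theorem exists_lt_blockTag_eq_bot [NoMinOrder X] (hc : StrictMono c) (a : X) :
    ∃ w, blockTag c w = ⊥ ∧ w < a := by
  obtain ⟨w, hw⟩ := exists_lt (min a (c 1))
  exact ⟨w, blockTag_eq_bot_iff.mpr (notMem_oddBlock_of_lt hc (hw.trans_le (min_le_right _ _))),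
    hw.trans_le (min_le_left _ _)⟩

open LexBy

theorem forall_toLexBy_lt_iff_exists_mem_oddBlock (hc : StrictMono c)
    (hcof : ∀ x, ∃ n, x ≤ c n) (x : X) :
    (∀ n, toLexBy (blockTag c) (c (2 * n)) < toLexBy (blockTag c) x) ↔
      ∃ n, x ∈ oddBlock c n := by
  constructor
  · intro h
    by_contra hx
    rw [not_exists] at hx
    obtain ⟨k, hk⟩ := hcof x
    rcases toLexBy_lt_toLexBy.mp (h k) with hlt | ⟨-, hlt⟩
    · exact not_lt_bot (blockTag_eq_bot_iff.mpr hx ▸ hlt)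
    · exact (hk.trans (hc.monotone (by omega))).not_gt hlt
  · rintro ⟨m, hm⟩ n
    apply toLexBy_lt_toLexBy_of_lt
    rw [blockTag_apply_two_mul hc, (blockTag_eq_coe_iff hc).mpr hm]
    exact WithBot.bot_lt_coe _

theorem toLexBy_lt_of_mem_oddBlock (hc : StrictMono c) {x : X} {n : ℕ} (hx : x ∈ oddBlock c n) :
    toLexBy (blockTag c) (c (2 * (n + 1) + 1)) < toLexBy (blockTag c) x := by
  apply toLexBy_lt_toLexBy_of_lt
  rw [(blockTag_eq_coe_iff hc).mpr hx,
    (blockTag_eq_coe_iff hc).mpr ⟨le_rfl, hc (by omega : 2 * (n + 1) + 1 < 2 * (n + 1) + 2)⟩]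
  exact WithBot.coe_lt_coe.mpr (toDual_lt_toDual.mpr n.lt_succ_self)

theorem exists_model_realizing_without_least_of_cofinal [DenselyOrdered X] [NoMinOrder X]
    (hc : StrictMono c) (hcof : ∀ x, ∃ n, x ≤ c n) :
    ∃ S : EL.Structure X, @Theory.Model EL X S T1 ∧
      (∃ a : X, RealizesP S a) ∧
      ¬ ∃ a : X, RealizesP S a ∧ ∀ b : X, RealizesP S b → Ele S a b := by
  have : DenselyOrdered (LexBy (blockTag c)) := LexBy.denselyOrdered
    (fun _ _ => exists_between_blockTag_eq hc) (exists_gt_blockTag_eq hc hcof)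
  have : NoMaxOrder (LexBy (blockTag c)) :=
    LexBy.noMaxOrder fun a => (exists_gt_blockTag_eq hc hcof a).imp fun _ h => ⟨h.1.ge, h.2⟩
  have : NoMinOrder (LexBy (blockTag c)) := LexBy.noMinOrder fun a => by
    obtain ⟨w, hw, hwa⟩ := exists_lt_blockTag_eq_bot hc a
    exact ⟨w, hw.le.trans bot_le, hwa⟩
  have hc' : StrictMono fun n => toLexBy (blockTag c) (c (2 * n)) :=
    strictMono_nat_of_lt_succ fun n => toLexBy_lt_toLexBy_of_le_of_lt
      (by rw [blockTag_apply_two_mul hc, blockTag_apply_two_mul hc]) (hc (by omega))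
  obtain ⟨S, hS, hle, hcon⟩ := exists_model_T1_of_strictMono hc'
  have hreal (x : X) : RealizesP S (toLexBy (blockTag c) x) ↔ ∃ n, x ∈ oddBlock c n := by
    rw [realizesP_iff hle, ← forall_toLexBy_lt_iff_exists_mem_oddBlock hc hcof]
    simp only [hcon]
  refine ⟨S, hS, ⟨_, (hreal (c 1)).mpr ⟨0, le_rfl, hc (by omega)⟩⟩, ?_⟩
  rintro ⟨a, ha, hleast⟩
  obtain ⟨n, hn⟩ := (hreal a).mp ha
  have hb := (hreal _).mpr ⟨n + 1, le_rfl, hc (by omega)⟩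
  exact (hle _ _).mp (hleast _ hb) |>.not_gt (toLexBy_lt_of_mem_oddBlock hc hn)

end Shuffle

/-- (ZF) If `T₁` has a model with universe `X` omitting `p(x) = {c_n < x : n < ω}`, then
`T₁` has a model with universe `X` in which `p(x)` is realized but has no `<`-least
realization. -/
theorem exists_model_realizing_without_least (X : Type*)
    (h : ∃ S : EL.Structure X, @Theory.Model EL X S T1 ∧ ∀ a : X, ¬ RealizesP S a) :
    ∃ S : EL.Structure X, @Theory.Model EL X S T1 ∧
      (∃ a : X, RealizesP S a) ∧
      ¬ ∃ a : X, RealizesP S a ∧ ∀ b : X, RealizesP S b → Ele S a b := by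
  obtain ⟨S, hS, homit⟩ := h
  obtain ⟨_, _, _, hc, hle⟩ := exists_linearOrder_of_model_T1 S hS
  have hcof (x : X) : ∃ n, x ≤ Econ S n := by
    simpa only [realizesP_iff hle, not_forall, not_lt] using homit x
  exact exists_model_realizing_without_least_of_cofinal hc hcof
end

section
/- In ZF: if the Ehrenfeucht theory T₁ (dense linear order without endpoints with an increasing ω-sequence of constants) has a model with universe X, then T₁ has at least three pairwise non-isomorphic models with universe X. -/
open FirstOrder Language

/-!
Whether the type `p` is omitted, realized without a least realization, or realized with a least
realization is invariant under isomorphism. For an increasing sequence `c` in a linear order,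
the realizations of `p` are exactly the upper bounds of `c`, and a least realization is a
supremum of `c`. A model of `T₁` is infinite, so `X` is in bijection with the dense linear order
without endpoints `WithTop X ×ₗ ℚ` (for any linear order on `X`), and there the sequences
`(⊤, n)`, `(x, n)` and `(⊤, -1/(n+1))` are unbounded, bounded without supremum, and have a
supremum, respectively.
-/

open Set

def HasLeastRealization {X : Type*} (S : EL.Structure X) : Prop :=
  ∃ a, RealizesP S a ∧ ∀ b, RealizesP S b → Ele S a b

section Invariance

variable {M N : Type*} {SM : EL.Structure M} {SN : EL.Structure N} (f : M ≃[EL] N)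

lemma econ_map (n : ℕ) : f (Econ SM n) = Econ SN n :=
  (f.map_fun _ _).trans (congrArg _ (Subsingleton.elim _ _))

lemma ele_map (a b : M) : Ele SN (f a) (f b) ↔ Ele SM a b := by
  have h := f.map_rel (Sum.inl leSymb : EL.Relations 2) ![a, b]
  -- `FinVec.map f ![a, b]` unfolds to `![f a, f b]`
  rwa [← FinVec.map_eq] at h

lemma elt_map (a b : M) : Elt SN (f a) (f b) ↔ Elt SM a b := by
  rw [Elt, Elt, ele_map, f.injective.ne_iff]

lemma realizesP_map (a : M) : RealizesP SN (f a) ↔ RealizesP SM a := by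
  simp only [RealizesP, ← econ_map f, elt_map]

lemma exists_realizesP_congr (f : M ≃[EL] N) :
    (∃ a, RealizesP SM a) ↔ ∃ b, RealizesP SN b :=
  _root_.Equiv.exists_congr f.toEquiv fun a => (realizesP_map f a).symm

lemma hasLeastRealization_congr (f : M ≃[EL] N) :
    HasLeastRealization SM ↔ HasLeastRealization SN := by
  refine _root_.Equiv.exists_congr f.toEquiv fun a => and_congr (realizesP_map f a).symm ?_
  refine _root_.Equiv.forall_congr f.toEquiv fun b => ?_
  exact imp_congr (realizesP_map f b).symm (ele_map f a b).symm

end Invariance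

section OfSeq

variable {W : Type*} [LinearOrder W]

abbrev structureOfSeq (c : ℕ → W) : EL.Structure W :=
  letI := orderStructure W
  letI := constantsOn.structure c
  inferInstanceAs ((Language.order.sum (constantsOn ℕ)).Structure W)

variable {c : ℕ → W}

lemma realizesP_structureOfSeq_iff (hc : StrictMono c) {a : W} :
    RealizesP (structureOfSeq c) a ↔ a ∈ upperBounds (range c) := by
  have h : RealizesP (structureOfSeq c) a ↔ ∀ n, c n < a :=
    forall_congr' fun n => lt_iff_le_and_ne.symm
  rw [h, mem_upperBounds, forall_mem_range]
  exact ⟨fun h n => (h n).le, fun h n => (hc n.lt_succ_self).trans_le (h (n + 1))⟩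

lemma exists_realizesP_structureOfSeq_iff (hc : StrictMono c) :
    (∃ a, RealizesP (structureOfSeq c) a) ↔ BddAbove (range c) := by
  simp only [realizesP_structureOfSeq_iff hc, BddAbove, Set.Nonempty]

lemma hasLeastRealization_structureOfSeq_iff (hc : StrictMono c) :
    HasLeastRealization (structureOfSeq c) ↔ ∃ a, IsLUB (range c) a := by
  simp only [HasLeastRealization, realizesP_structureOfSeq_iff hc, IsLUB, IsLeast,
    mem_lowerBounds]
  rfl

lemma model_structureOfSeq [DenselyOrdered W] [NoMinOrder W] [NoMaxOrder W]
    (hc : StrictMono c) : @Theory.Model EL W (structureOfSeq c) T1 := by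
  let := orderStructure W
  let := constantsOn.structure c
  have : Language.order.OrderedStructure W := ⟨fun _ => Iff.rfl⟩
  have : EL.OrderedStructure W := ⟨fun _ => Iff.rfl⟩
  show W ⊨ T1
  refine Theory.model_union_iff.2 ⟨?_, (Theory.model_iff _).2 ?_⟩
  · exact (@LHom.onTheory_model _ _ W _ _ _ (LHom.sumInl_isExpansionOn W) _).2 inferInstance
  · rintro _ ⟨n, rfl⟩
    show ((cT n).lt (cT (n + 1))).Realize (default : Empty → W) (default : Fin 0 → W)
    rw [Term.realize_lt]
    exact hc n.lt_succ_self

end OfSeq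

section Lex

variable {α β : Type*} [LinearOrder α] [LinearOrder β] {q : ℕ → β}

lemma strictMono_toLex_const (x : α) (hq : StrictMono q) : StrictMono fun n => toLex (x, q n) :=
  Prod.Lex.toLex_strictMono.comp fun _ _ h => Prod.mk_lt_mk_iff_right.2 (hq h)

lemma upperBounds_range_toLex (x : α) (hq : ¬ BddAbove (range q)) :
    upperBounds (range fun n => toLex (x, q n)) = {b | x < (ofLex b).1} := by
  ext b
  simp only [mem_upperBounds, forall_mem_range, mem_ofPred_eq]
  refine ⟨fun h => ?_, fun hb n => Prod.Lex.le_iff.2 (Or.inl hb)⟩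
  by_contra! hb
  refine hq ⟨(ofLex b).2, forall_mem_range.2 fun n => ?_⟩
  rcases Prod.Lex.le_iff.1 (h n) with hlt | ⟨-, hle⟩
  · exact absurd hlt hb.not_gt
  · exact hle

lemma not_bddAbove_range_toLex_top [OrderTop α] (hq : ¬ BddAbove (range q)) :
    ¬ BddAbove (range fun n => toLex ((⊤ : α), q n)) := by
  rw [BddAbove, upperBounds_range_toLex _ hq]
  exact fun ⟨_, hb⟩ => not_top_lt hb

lemma bddAbove_range_toLex {x y : α} (hxy : x < y) (hq : ¬ BddAbove (range q)) :
    BddAbove (range fun n => toLex (x, q n)) := by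
  rw [BddAbove, upperBounds_range_toLex _ hq]
  exact ⟨toLex (y, q 0), hxy⟩

lemma not_isLUB_range_toLex [NoMinOrder β] (x : α) (hq : ¬ BddAbove (range q))
    (a : α ×ₗ β) :
    ¬ IsLUB (range fun n => toLex (x, q n)) a := by
  intro ha
  rw [IsLUB, upperBounds_range_toLex x hq] at ha
  obtain ⟨r, hr⟩ := exists_lt (ofLex a).2
  have hle : a ≤ toLex ((ofLex a).1, r) := ha.2 (show x < (ofLex a).1 from ha.1)
  exact hle.not_gt (Prod.Lex.lt_iff.2 (Or.inr ⟨rfl, hr⟩))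

lemma isLUB_range_toLex (x : α) {r : β} (hr : IsLUB (range q) r) :
    IsLUB (range fun n => toLex (x, q n)) (toLex (x, r)) := by
  refine ⟨forall_mem_range.2 fun n => Prod.Lex.toLex_mono ⟨le_rfl, hr.1 (mem_range_self n)⟩,
    fun b hb => ?_⟩
  rw [mem_upperBounds, forall_mem_range] at hb
  rcases Prod.Lex.le_iff.1 (hb 0) with hlt | ⟨hx, -⟩
  · exact Prod.Lex.le_iff.2 (Or.inl hlt)
  refine Prod.Lex.le_iff.2 (Or.inr ⟨hx, hr.2 (forall_mem_range.2 fun n => ?_)⟩)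
  rcases Prod.Lex.le_iff.1 (hb n) with hlt | ⟨-, hle⟩
  · exact absurd hx hlt.ne
  · exact hle

end Lex

section Archimedean

variable {K : Type*} [Field K] [LinearOrder K] [IsStrictOrderedRing K]

lemma strictMono_neg_inv_natCast_add_one : StrictMono fun n : ℕ => -((n : K) + 1)⁻¹ :=
  fun _ _ h => neg_lt_neg <|
    inv_strictAnti₀ (by positivity) (by exact_mod_cast Nat.succ_lt_succ h)

variable [Archimedean K]

lemma not_bddAbove_range_natCast : ¬ BddAbove (range ((↑) : ℕ → K)) := fun ⟨b, hb⟩ =>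
  let ⟨n, hn⟩ := exists_nat_gt b
  hn.not_ge (hb (mem_range_self n))

lemma isLUB_range_neg_inv_natCast_add_one : IsLUB (range fun n : ℕ => -((n : K) + 1)⁻¹) 0 := by
  refine ⟨forall_mem_range.2 fun n => neg_nonpos.2 (by positivity), fun b hb => ?_⟩
  by_contra! hb0
  obtain ⟨n, hn⟩ := exists_nat_one_div_lt (neg_pos.2 hb0)
  have := hb (mem_range_self n)
  rw [one_div] at hn
  linarith

end Archimedean

lemma nonempty_equiv_withTop_lex_rat (X : Type*) [Infinite X] :
    Nonempty (WithTop X ×ₗ ℚ ≃ X) := by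
  refine Cardinal.eq.1 ?_
  show Cardinal.mk (Option X × ℚ) = Cardinal.mk X
  simp [Cardinal.mk_prod, Cardinal.mk_option, Cardinal.mul_aleph0_eq]

lemma infinite_of_model_T1 {X : Type*} (S : EL.Structure X) (h : @Theory.Model EL X S T1) :
    Infinite X := by
  let : (Language.order.sum (constantsOn ℕ)).Structure X := S
  let : Language.order.Structure X := (LHom.sumInl : Language.order →ᴸ EL).reduct X
  have : (LHom.sumInl : Language.order →ᴸ EL).IsExpansionOn X := LHom.isExpansionOn_reduct _ _
  have : X ⊨ Language.order.dlo := (LHom.sumInl.onTheory_model _).1 (h.mono subset_union_left)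
  have : Nonempty X := ⟨Econ S 0⟩
  infer_instance

lemma exists_model_of_equiv {W X : Type*} [LinearOrder W] [DenselyOrdered W] [NoMinOrder W]
    [NoMaxOrder W] (e : W ≃ X) {c : ℕ → W} (hc : StrictMono c) :
    ∃ S : EL.Structure X, @Theory.Model EL X S T1 ∧
      ((∃ a, RealizesP S a) ↔ BddAbove (range c)) ∧
      (HasLeastRealization S ↔ ∃ a, IsLUB (range c) a) := by
  let : EL.Structure W := structureOfSeq c
  have : W ⊨ T1 := model_structureOfSeq hc
  let S : EL.Structure X := Equiv.inducedStructure e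
  let f : W ≃[EL] X := Equiv.inducedStructureEquiv e
  refine ⟨S, StrongHomClass.theory_model f, ?_, ?_⟩
  · rw [← exists_realizesP_structureOfSeq_iff hc]
    exact (exists_realizesP_congr f).symm
  · rw [← hasLeastRealization_structureOfSeq_iff hc]
    exact (hasLeastRealization_congr f).symm

/-- (ZF) If the Ehrenfeucht theory `T₁` has a model with universe `X`, then it has at
least three pairwise non-isomorphic models with universe `X`. -/
theorem three_nonisomorphic_models (X : Type*)
    (h : ∃ S : EL.Structure X, @Theory.Model EL X S T1) :
    ∃ S₁ S₂ S₃ : EL.Structure X,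
      @Theory.Model EL X S₁ T1 ∧ @Theory.Model EL X S₂ T1 ∧ @Theory.Model EL X S₃ T1 ∧
      ¬ Nonempty (@Language.Equiv EL X X S₁ S₂) ∧
      ¬ Nonempty (@Language.Equiv EL X X S₁ S₃) ∧
      ¬ Nonempty (@Language.Equiv EL X X S₂ S₃) := by
  classical
  obtain ⟨S₀, hS₀⟩ := h
  have : Infinite X := infinite_of_model_T1 S₀ hS₀
  let : LinearOrder X := linearOrderOfSTO WellOrderingRel
  obtain ⟨x⟩ : Nonempty X := inferInstance
  obtain ⟨e⟩ := nonempty_equiv_withTop_lex_rat X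
  have hℕ : ¬ BddAbove (range ((↑) : ℕ → ℚ)) := not_bddAbove_range_natCast
  obtain ⟨S₁, hS₁, realized₁, -⟩ :=
    exists_model_of_equiv e (strictMono_toLex_const (⊤ : WithTop X) Nat.strictMono_cast)
  obtain ⟨S₂, hS₂, realized₂, least₂⟩ :=
    exists_model_of_equiv e (strictMono_toLex_const (x : WithTop X) Nat.strictMono_cast)
  obtain ⟨S₃, hS₃, realized₃, least₃⟩ := exists_model_of_equiv e
    (strictMono_toLex_const (⊤ : WithTop X) strictMono_neg_inv_natCast_add_one)
  have omits₁ : ¬ ∃ a, RealizesP S₁ a := realized₁.not.2 (not_bddAbove_range_toLex_top hℕ)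
  have realizes₂ : ∃ a, RealizesP S₂ a :=
    realized₂.2 (bddAbove_range_toLex (WithTop.coe_lt_top x) hℕ)
  have noLeast₂ : ¬ HasLeastRealization S₂ :=
    least₂.not.2 fun ⟨a, ha⟩ => not_isLUB_range_toLex _ hℕ a ha
  have hlub₃ := isLUB_range_toLex (⊤ : WithTop X) (isLUB_range_neg_inv_natCast_add_one (K := ℚ))
  have hasLeast₃ : HasLeastRealization S₃ := least₃.2 ⟨_, hlub₃⟩
  have realizes₃ : ∃ a, RealizesP S₃ a := realized₃.2 hlub₃.bddAbove
  exact ⟨S₁, S₂, S₃, hS₁, hS₂, hS₃,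
    fun ⟨f⟩ => omits₁ ((exists_realizesP_congr f).2 realizes₂),
    fun ⟨f⟩ => omits₁ ((exists_realizesP_congr f).2 realizes₃),
    fun ⟨f⟩ => noLeast₂ ((hasLeastRealization_congr f).2 hasLeast₃)⟩
end

section
/- In ZF: a countable first-order theory T₁ of dense linear orders without endpoints with an increasing ω-sequence of constants is not categorical in any infinite power: whenever it has a model with universe X, it has at least two non-isomorphic models with universe X. -/
open FirstOrder Language

/-!
A model of `T₁` on `X` is a dense linear order without endpoints on `X` together with a strictly
increasing sequence `c`. Cutting `X` in two and reversing one piece gives two more such orders.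
Moving the reversed ray `(-∞, c₀]` to the top puts `c₁ < c₂ < ⋯` below `c₀`, so `c₀` realizes
the type `p(x) = {cₙ < x}`; moving the reversed set of upper bounds of the `cₙ` to the bottom
makes the `cₙ` cofinal, so `p` is omitted. Both are ordered sums of convex pieces of `X`, hence
again dense without endpoints, and realizing `p` is invariant under isomorphism. The new orders
are defined outright from the old one, so no choice is involved.
-/

section
variable {α : Type*} [Preorder α] {s : Set α}

lemma IsUpperSet.noMaxOrder [NoMaxOrder α] (hs : IsUpperSet s) : NoMaxOrder s :=
  ⟨fun ⟨a, ha⟩ => let ⟨b, hb⟩ := exists_gt a; ⟨⟨b, hs hb.le ha⟩, hb⟩⟩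

lemma IsLowerSet.noMinOrder [NoMinOrder α] (hs : IsLowerSet s) : NoMinOrder s :=
  ⟨fun ⟨a, ha⟩ => let ⟨b, hb⟩ := exists_lt a; ⟨⟨b, hs hb.le ha⟩, hb⟩⟩

end

namespace Ehrenfeucht

open Set

variable {X Y : Type*}

lemma realize_cT (S : EL.Structure X) (v : Empty ⊕ Fin 0 → X) (n : ℕ) :
    @Term.realize EL X S _ v (cT n) = Econ S n :=
  congrArg (@Structure.funMap EL X S 0 _) (Subsingleton.elim _ _)

theorem exists_dlo_of_model (S : EL.Structure X) (hS : @Theory.Model EL X S T1) :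
    ∃ _ : LinearOrder X, DenselyOrdered X ∧ NoMinOrder X ∧ NoMaxOrder X ∧ StrictMono (Econ S) := by
  classical
  let _ := S
  let _ : (Language.order.sum (constantsOn ℕ)).Structure X := S
  obtain ⟨hdlo, hconst⟩ := Theory.model_union_iff.1 hS
  let _ : Language.order.Structure X := (LHom.sumInl : Language.order →ᴸ EL).reduct X
  have : (LHom.sumInl : Language.order →ᴸ EL).IsExpansionOn X := LHom.isExpansionOn_reduct _ X
  have : X ⊨ Language.order.dlo := (LHom.onTheory_model LHom.sumInl _).1 hdlo
  let _ : LinearOrder X := Language.order.linearOrderOfModels X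
  have hle (x : Fin 2 → X) : @Structure.RelMap EL X _ 2 (Sum.inl leSymb) x ↔ x 0 ≤ x 1 := by
    rw [← FinVec.etaExpand_eq x]; rfl
  have : Language.order.OrderedStructure X := ⟨hle⟩
  have : EL.OrderedStructure X := ⟨hle⟩
  have : NoTopOrder X := noTopOrder_of_dlo Language.order X
  have : NoBotOrder X := noBotOrder_of_dlo Language.order X
  refine ⟨‹_›, denselyOrdered_of_dlo Language.order X, NoBotOrder.to_noMinOrder X,
    NoTopOrder.to_noMaxOrder X, strictMono_nat_of_lt_succ fun n => ?_⟩
  have hn : X ⊨ Term.lt (cT n) (cT (n + 1)) := hconst.realize_of_mem _ ⟨n, rfl⟩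
  simpa only [realize_cT] using (Term.realize_lt (L := EL)).1 hn

abbrev structureOfOrder [LE Y] (c : ℕ → Y) : EL.Structure Y :=
  @Language.sumStructure _ _ Y (orderStructure Y) (constantsOn.structure c)

lemma econ_structureOfOrder [LE Y] (c : ℕ → Y) (n : ℕ) : Econ (structureOfOrder c) n = c n := rfl

lemma elt_structureOfOrder [PartialOrder Y] (c : ℕ → Y) {a b : Y} :
    Elt (structureOfOrder c) a b ↔ a < b :=
  lt_iff_le_and_ne.symm

lemma exists_realizesP_iff [PartialOrder Y] {c : ℕ → Y} (hc : StrictMono c) :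
    (∃ a, RealizesP (structureOfOrder c) a) ↔ BddAbove (range c) := by
  simp only [RealizesP, econ_structureOfOrder, elt_structureOfOrder, BddAbove, Set.Nonempty,
    mem_upperBounds, forall_mem_range]
  exact exists_congr fun a => ⟨fun h n => (h n).le, fun h n => (hc n.lt_succ_self).trans_le (h _)⟩

theorem model_structureOfOrder [LinearOrder Y] [DenselyOrdered Y] [NoMinOrder Y] [NoMaxOrder Y]
    {c : ℕ → Y} (hc : StrictMono c) : @Theory.Model EL Y (structureOfOrder c) T1 := by
  let _ : EL.Structure Y := structureOfOrder c
  let _ : (Language.order.sum (constantsOn ℕ)).Structure Y := structureOfOrder c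
  let _ : Language.order.Structure Y := orderStructure Y
  have : (LHom.sumInl : Language.order →ᴸ EL).IsExpansionOn Y := ⟨fun _ _ => rfl, fun _ _ => rfl⟩
  have : Language.order.OrderedStructure Y := ⟨fun _ => Iff.rfl⟩
  have : EL.OrderedStructure Y := ⟨fun _ => Iff.rfl⟩
  refine Theory.model_union_iff.2 ⟨(LHom.onTheory_model LHom.sumInl _).2 inferInstance, ?_⟩
  refine (Theory.model_iff _).2 ?_
  rintro _ ⟨n, rfl⟩
  exact (Term.realize_lt (L := EL)).2 (hc n.lt_succ_self)

section Equiv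

variable {S₁ : EL.Structure X} {S₂ : EL.Structure Y} (f : @Language.Equiv EL X Y S₁ S₂)
include f

lemma map_econ (n : ℕ) : f (Econ S₁ n) = Econ S₂ n := by
  simpa only [Econ, Matrix.empty_eq] using @Language.Equiv.map_fun EL X Y S₁ S₂ f 0 _ ![]

lemma elt_map_iff {a b : X} : Elt S₂ (f a) (f b) ↔ Elt S₁ a b := by
  have hv : f ∘ ![a, b] = ![f a, f b] := (FinVec.map_eq _ _).symm
  have := @Language.Equiv.map_rel EL X Y S₁ S₂ f 2 (Sum.inl leSymb) ![a, b]
  rw [hv] at this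
  simp only [Elt, Ele, this, f.injective.ne_iff]

lemma RealizesP.map {a : X} (h : RealizesP S₁ a) : RealizesP S₂ (f a) := fun n => by
  rw [← map_econ f, elt_map_iff]
  exact h n

end Equiv

theorem exists_model_of_equiv [LinearOrder Y] [DenselyOrdered Y] [NoMinOrder Y] [NoMaxOrder Y]
    (e : X ≃ Y) {c : ℕ → Y} (hc : StrictMono c) :
    ∃ S : EL.Structure X, @Theory.Model EL X S T1 ∧
      ((∃ a, RealizesP S a) ↔ BddAbove (range c)) := by
  let _ : EL.Structure Y := structureOfOrder c
  let S : EL.Structure X := e.symm.inducedStructure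
  let g : Y ≃[EL] X := e.symm.inducedStructureEquiv
  have := model_structureOfOrder hc
  refine ⟨S, StrongHomClass.theory_model g, ?_⟩
  rw [← exists_realizesP_iff hc]
  exact ⟨fun ⟨a, ha⟩ => ⟨_, RealizesP.map g.symm ha⟩, fun ⟨a, ha⟩ => ⟨_, RealizesP.map g ha⟩⟩

variable [LinearOrder X] [DenselyOrdered X] [NoMinOrder X] [NoMaxOrder X] {c : ℕ → X}

theorem exists_model_realizesP (hc : StrictMono c) :
    ∃ S : EL.Structure X, @Theory.Model EL X S T1 ∧ ∃ a, RealizesP S a := by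
  let e : X ≃ Ioi (c 0) ⊕ₗ (Iic (c 0))ᵒᵈ :=
    (Equiv.Set.sumCompl (Ioi (c 0))).symm.trans <|
      (Equiv.sumCongr (Equiv.refl _) ((Equiv.setCongr compl_Ioi).trans OrderDual.toDual)).trans
        toLex
  let d : ℕ → Ioi (c 0) ⊕ₗ (Iic (c 0))ᵒᵈ := fun n => toLex (.inl ⟨c (n + 1), hc n.succ_pos⟩)
  have hd : StrictMono d := Sum.Lex.inl_strictMono.comp fun m n h => hc (Nat.succ_lt_succ h)
  obtain ⟨S, hS, hreal⟩ := exists_model_of_equiv e hd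
  refine ⟨S, hS, hreal.2 ⟨toLex (.inr (OrderDual.toDual ⟨c 0, le_rfl⟩)), ?_⟩⟩
  exact forall_mem_range.2 fun n => Sum.Lex.inl_le_inr _ _

theorem exists_model_not_realizesP (hc : StrictMono c) :
    ∃ S : EL.Structure X, @Theory.Model EL X S T1 ∧ ∀ a, ¬ RealizesP S a := by
  classical
  set s := upperBounds (range c)
  have hs : IsUpperSet s := fun a b hab ha _ hx => (ha hx).trans hab
  have hcs (n : ℕ) : c n ∈ sᶜ := fun h => (hc n.lt_succ_self).not_ge (h (mem_range_self _))
  have := hs.ordConnected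
  have := hs.compl.ordConnected
  have := hs.noMaxOrder
  have := hs.compl.noMinOrder
  have : NoMaxOrder ↥sᶜ := ⟨fun ⟨a, ha⟩ => by
    obtain ⟨_, ⟨n, rfl⟩, hn⟩ := not_forall₂.1 ha
    exact ⟨⟨c n, hcs n⟩, lt_of_not_ge hn⟩⟩
  have : Nonempty ↥sᶜ := ⟨⟨c 0, hcs 0⟩⟩
  let e : X ≃ sᵒᵈ ⊕ₗ ↥sᶜ :=
    (Equiv.Set.sumCompl s).symm.trans <|
      (Equiv.sumCongr OrderDual.toDual (Equiv.refl _)).trans toLex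
  let d : ℕ → sᵒᵈ ⊕ₗ ↥sᶜ := fun n => toLex (.inr ⟨c n, hcs n⟩)
  have hd : StrictMono d := Sum.Lex.inr_strictMono.comp fun m n h => hc h
  obtain ⟨S, hS, hreal⟩ := exists_model_of_equiv e hd
  refine ⟨S, hS, fun a ha => ?_⟩
  obtain ⟨y, hy⟩ := hreal.1 ⟨a, ha⟩
  rw [mem_upperBounds, forall_mem_range] at hy
  rcases y with y | y
  · exact Sum.Lex.not_inr_le_inl (hy 0)
  · exact y.2 (forall_mem_range.2 fun n => Subtype.coe_le_coe.2 (Sum.Lex.inr_le_inr_iff.1 (hy n)))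

end Ehrenfeucht

open Ehrenfeucht in
/-- (ZF) The Ehrenfeucht theory `T₁` is not categorical in any infinite power: whenever it
has a model with universe `X`, it has two non-isomorphic models with universe `X`. -/
theorem T1_not_categorical (X : Type*)
    (h : ∃ S : EL.Structure X, @Theory.Model EL X S T1) :
    ∃ S₁ S₂ : EL.Structure X,
      @Theory.Model EL X S₁ T1 ∧ @Theory.Model EL X S₂ T1 ∧
      ¬ Nonempty (@Language.Equiv EL X X S₁ S₂) := by
  obtain ⟨S, hS⟩ := h
  obtain ⟨_, _, _, _, hc⟩ := exists_dlo_of_model S hS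
  obtain ⟨S₁, hS₁, a, ha⟩ := exists_model_realizesP hc
  obtain ⟨S₂, hS₂, homit⟩ := exists_model_not_realizesP hc
  exact ⟨S₁, S₂, hS₁, hS₂, fun ⟨f⟩ => homit (f a) (ha.map f)⟩
end
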